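/- Let m ≥ 1, x_k = k/2^m, and y_k = φ₂(k) for k = 0,...,2^m−1. Then ∑_{k=0}^{2^m−1} x_k²·y_k² = (8(2^{2m+1} − 3·2^m + 1)² + 9m·2^m(4^{m+1} + 2^m(m−9) + 4))/(9·2^{3m+5}). -/

import Mathlib

/-!
Splitting off the lowest binary digit, `k = 2j + r`, gives `φ₂(k) = (r + φ₂(j)) / 2`. Hence the
moment `∑_{k < 2^(m+1)} k^a φ₂(k)^b` is, by the binomial theorem, a linear combination of the
moments `∑_{k < 2^m} k^a' φ₂(k)^b'` with `a' ≤ a`, `b' ≤ b`. Solving these recursions for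
`a, b ≤ 2`, in increasing order, gives closed forms; the sum in question is the `(2, 2)` moment
divided by `4^m`.
-/

/-- The base-2 digit reversal (radical inverse) function. -/
noncomputable def phi2 (k : ℕ) : ℝ :=
  ∑ i ∈ Finset.range (k + 1), if Nat.testBit k i then (1 : ℝ) / 2 ^ (i + 1) else 0

open Finset

lemma phi2_eq_sum_range_of_lt {k n : ℕ} (h : k < n) :
    phi2 k = ∑ i ∈ range n, if k.testBit i then (1 : ℝ) / 2 ^ (i + 1) else 0 := by
  refine sum_subset (range_subset_range.2 h) fun i _ hi => ?_
  have hk : k < 2 ^ i := (Nat.lt_two_pow_self).trans_le <|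
    Nat.pow_le_pow_right two_pos (by simp at hi; omega)
  simp [Nat.testBit_lt_two_pow hk]

lemma phi2_eq_mod_two_add_phi2_div_two (k : ℕ) : phi2 k = ((k % 2 : ℕ) + phi2 (k / 2)) / 2 := by
  rw [phi2_eq_sum_range_of_lt (n := k + 2) (by omega), sum_range_succ',
    phi2_eq_sum_range_of_lt (k := k / 2) (n := k + 1) (by omega), add_div, sum_div, add_comm]
  congr 1
  · rcases Nat.mod_two_eq_zero_or_one k with h | h <;> simp [h]
  · refine sum_congr rfl fun i _ => ?_
    rw [Nat.testBit_div_two]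
    split_ifs <;> ring

lemma phi2_zero : phi2 0 = 0 := by
  simp [phi2]

lemma phi2_two_mul (j : ℕ) : phi2 (2 * j) = phi2 j / 2 := by
  rw [phi2_eq_mod_two_add_phi2_div_two]; simp

lemma phi2_two_mul_add_one (j : ℕ) : phi2 (2 * j + 1) = (phi2 j + 1) / 2 := by
  have hmod : (2 * j + 1) % 2 = 1 := by omega
  have hdiv : (2 * j + 1) / 2 = j := by omega
  rw [phi2_eq_mod_two_add_phi2_div_two, hmod, hdiv]
  push_cast
  ring

theorem Finset.sum_range_two_mul {M : Type*} [AddCommMonoid M] (f : ℕ → M) (n : ℕ) :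
    ∑ k ∈ range (2 * n), f k = ∑ j ∈ range n, (f (2 * j) + f (2 * j + 1)) := by
  induction n with
  | zero => simp
  | succ n ih =>
    rw [Nat.mul_succ, sum_range_succ, sum_range_succ, sum_range_succ, ih, add_assoc]

noncomputable def phi2Moment (a b m : ℕ) : ℝ :=
  ∑ k ∈ range (2 ^ m), (k : ℝ) ^ a * phi2 k ^ b

lemma phi2Moment_succ (a b m : ℕ) :
    phi2Moment a b (m + 1) = (2 ^ a * phi2Moment a b m + ∑ i ∈ range (a + 1), ∑ l ∈ range (b + 1),
      (a.choose i * b.choose l * 2 ^ i : ℝ) * phi2Moment i l m) / 2 ^ b := by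
  have hodd (j : ℕ) : ((2 * j + 1 : ℕ) : ℝ) ^ a * phi2 (2 * j + 1) ^ b =
      (∑ i ∈ range (a + 1), ∑ l ∈ range (b + 1),
        (a.choose i * b.choose l * 2 ^ i : ℝ) * ((j : ℝ) ^ i * phi2 j ^ l)) / 2 ^ b := by
    push_cast
    rw [phi2_two_mul_add_one, div_pow, mul_div_assoc', add_pow, add_pow, sum_mul_sum]
    congr 1
    refine sum_congr rfl fun i _ => sum_congr rfl fun l _ => ?_
    ring
  have heven (j : ℕ) : ((2 * j : ℕ) : ℝ) ^ a * phi2 (2 * j) ^ b =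
      2 ^ a * ((j : ℝ) ^ a * phi2 j ^ b) / 2 ^ b := by
    rw [phi2_two_mul, div_pow]; push_cast; ring
  simp only [phi2Moment, pow_succ', sum_range_two_mul, heven, hodd, ← add_div, sum_add_distrib,
    ← sum_div, ← mul_sum]
  congr 2
  rw [sum_comm]
  refine sum_congr rfl fun i _ => ?_
  rw [sum_comm]
  simp only [mul_sum]

lemma phi2Moment_zero_zero (m : ℕ) : phi2Moment 0 0 m = 2 ^ m := by
  simp [phi2Moment]

lemma phi2Moment_one_zero (m : ℕ) : phi2Moment 1 0 m = ((2 ^ m) ^ 2 - 2 ^ m) / 2 := by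
  induction m with
  | zero => norm_num [phi2Moment, phi2_zero]
  | succ m ih =>
    rw [phi2Moment_succ]
    simp only [sum_range_succ, sum_range_zero, Nat.choose, Nat.cast_zero, Nat.cast_succ, ih,
      phi2Moment_zero_zero]
    ring

lemma phi2Moment_two_zero (m : ℕ) :
    phi2Moment 2 0 m = (2 * (2 ^ m) ^ 3 - 3 * (2 ^ m) ^ 2 + 2 ^ m) / 6 := by
  induction m with
  | zero => norm_num [phi2Moment, phi2_zero]
  | succ m ih =>
    rw [phi2Moment_succ]
    simp only [sum_range_succ, sum_range_zero, Nat.choose, Nat.cast_zero, Nat.cast_succ, ih,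
      phi2Moment_zero_zero, phi2Moment_one_zero]
    ring

lemma phi2Moment_zero_one (m : ℕ) : phi2Moment 0 1 m = (2 ^ m - 1) / 2 := by
  induction m with
  | zero => norm_num [phi2Moment, phi2_zero]
  | succ m ih =>
    rw [phi2Moment_succ]
    simp only [sum_range_succ, sum_range_zero, Nat.choose, Nat.cast_zero, Nat.cast_succ, ih,
      phi2Moment_zero_zero]
    ring

lemma phi2Moment_zero_two (m : ℕ) :
    phi2Moment 0 2 m = (2 * (2 ^ m) ^ 2 - 3 * 2 ^ m + 1) / (6 * 2 ^ m) := by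
  induction m with
  | zero => norm_num [phi2Moment, phi2_zero]
  | succ m ih =>
    rw [phi2Moment_succ]
    simp only [sum_range_succ, sum_range_zero, Nat.choose, Nat.cast_zero, Nat.cast_succ, ih,
      phi2Moment_zero_zero, phi2Moment_zero_one]
    field_simp
    ring

lemma phi2Moment_one_one (m : ℕ) :
    phi2Moment 1 1 m = (2 * (2 ^ m) ^ 2 + m * 2 ^ m - 4 * 2 ^ m + 2) / 8 := by
  induction m with
  | zero => norm_num [phi2Moment, phi2_zero]
  | succ m ih =>
    rw [phi2Moment_succ]
    simp only [sum_range_succ, sum_range_zero, Nat.choose, Nat.cast_zero, Nat.cast_succ, ih,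
      phi2Moment_zero_zero, phi2Moment_zero_one, phi2Moment_one_zero]
    ring

lemma phi2Moment_two_one (m : ℕ) :
    phi2Moment 2 1 m = (12 * (2 ^ m) ^ 3 + 9 * m * (2 ^ m) ^ 2 - 30 * (2 ^ m) ^ 2
      - 9 * m * 2 ^ m + 24 * 2 ^ m - 6) / 72 := by
  induction m with
  | zero => norm_num [phi2Moment, phi2_zero]
  | succ m ih =>
    rw [phi2Moment_succ]
    simp only [sum_range_succ, sum_range_zero, Nat.choose, Nat.cast_zero, Nat.cast_succ, ih,
      phi2Moment_zero_zero, phi2Moment_zero_one, phi2Moment_one_zero, phi2Moment_one_one,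
      phi2Moment_two_zero]
    ring

lemma phi2Moment_one_two (m : ℕ) :
    phi2Moment 1 2 m = (12 * (2 ^ m) ^ 3 + 9 * m * (2 ^ m) ^ 2 - 30 * (2 ^ m) ^ 2
      - 9 * m * 2 ^ m + 24 * 2 ^ m - 6) / (72 * 2 ^ m) := by
  induction m with
  | zero => norm_num [phi2Moment, phi2_zero]
  | succ m ih =>
    rw [phi2Moment_succ]
    simp only [sum_range_succ, sum_range_zero, Nat.choose, Nat.cast_zero, Nat.cast_succ, ih,
      phi2Moment_zero_zero, phi2Moment_zero_one, phi2Moment_one_zero, phi2Moment_one_one,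
      phi2Moment_zero_two]
    field_simp
    ring

lemma phi2Moment_two_two (m : ℕ) :
    phi2Moment 2 2 m = (32 * (2 ^ m) ^ 4 + 36 * m * (2 ^ m) ^ 3 - 96 * (2 ^ m) ^ 3
      + 9 * m ^ 2 * (2 ^ m) ^ 2 - 81 * m * (2 ^ m) ^ 2 + 104 * (2 ^ m) ^ 2
      + 36 * m * 2 ^ m - 48 * 2 ^ m + 8) / (288 * 2 ^ m) := by
  induction m with
  | zero => norm_num [phi2Moment, phi2_zero]
  | succ m ih =>
    rw [phi2Moment_succ]
    simp only [sum_range_succ, sum_range_zero, Nat.choose, Nat.cast_zero, Nat.cast_succ, ih,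
      phi2Moment_zero_zero, phi2Moment_zero_one, phi2Moment_one_zero, phi2Moment_one_one,
      phi2Moment_zero_two, phi2Moment_two_zero, phi2Moment_two_one, phi2Moment_one_two]
    field_simp
    ring

theorem hammersley_S5_general (m : ℕ) :
    ∑ k ∈ Finset.range (2 ^ m), ((k : ℝ) / 2 ^ m) ^ 2 * (phi2 k) ^ 2
      = (8 * ((2:ℝ) ^ (2 * m + 1) - 3 * 2 ^ m + 1) ^ 2
          + 9 * (m : ℝ) * 2 ^ m * ((4:ℝ) ^ (m + 1) + 2 ^ m * ((m : ℝ) - 9) + 4))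
        / (9 * 2 ^ (3 * m + 5)) := by
  have hsum : ∑ k ∈ range (2 ^ m), ((k : ℝ) / 2 ^ m) ^ 2 * phi2 k ^ 2
      = phi2Moment 2 2 m / (2 ^ m) ^ 2 := by
    rw [phi2Moment, sum_div]
    exact sum_congr rfl fun k _ => by ring
  have hfour : (4 : ℝ) ^ (m + 1) = 4 * (2 ^ m) ^ 2 := by
    rw [show (4 : ℝ) = 2 ^ 2 by norm_num, ← pow_mul]
    ring
  rw [hsum, phi2Moment_two_two, hfour]
  field_simp
  ring

theorem hammersley_S5 (m : ℕ) (hm : 1 ≤ m) :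
    ∑ k ∈ Finset.range (2 ^ m), ((k : ℝ) / 2 ^ m) ^ 2 * (phi2 k) ^ 2
      = (8 * ((2:ℝ) ^ (2 * m + 1) - 3 * 2 ^ m + 1) ^ 2
          + 9 * (m : ℝ) * 2 ^ m * ((4:ℝ) ^ (m + 1) + 2 ^ m * ((m : ℝ) - 9) + 4))
        / (9 * 2 ^ (3 * m + 5)) :=
  hammersley_S5_general m
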